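/- Let b ∈ L^∞(ℝ) and λ ∈ ℝ, and let e_λ(x) := e^{2πiλx}. Then, in the operator norm on L^2(ℝ), ‖W^0(b) ∘ M_{e_λ} − M_{e_λ} ∘ W^0(b)‖ = ‖b − b(· − λ)‖_{L^∞(ℝ)}, i.e. the norm of the commutator of the Fourier convolution operator W^0(b) with the modulation operator M_{e_λ} equals the essential supremum of |b(x) − b(x − λ)| over x ∈ ℝ. -/

import Mathlib

/-!
Conjugation by the Fourier–Plancherel transform turns the modulation `M_{e_λ}` into the
translation `T_λ u = u (· - λ)`; this is the shift rule for the Fourier integral, valid on the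
dense subspace of integrable functions. Hence the commutator is unitarily equivalent to
`M_b T_λ - T_λ M_b = (M_b - T_λ M_b T_λ⁻¹) T_λ = M_{b - b(· - λ)} T_λ`, whose norm is that of
the multiplication operator `M_{b - b(· - λ)}`. The norm of a multiplication operator on `L^p`
of a σ-finite space is the essential supremum of its symbol: `≤` is Hölder's inequality, and
`≥` comes from testing on indicators of finite-measure sets where the symbol is large.
-/

open MeasureTheory Filter Topology
open scoped ENNReal

noncomputable section

/-- The space `L^2(ℝ)` of complex-valued square-integrable functions on `ℝ`. -/
abbrev L2Sp := Lp ℂ 2 (volume : Measure ℝ)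

/-- Bounded operators on `L^2(ℝ)`. -/
abbrev OpSp := L2Sp →L[ℂ] L2Sp

/-- `M` is the operator of multiplication by the function `a` on `L^2(ℝ)`. -/
def IsMulOp (a : ℝ → ℂ) (M : OpSp) : Prop :=
  ∀ u : L2Sp, (M u : ℝ → ℂ) =ᵐ[volume] fun x => a x * (u : ℝ → ℂ) x

/-- `F` is the Fourier–Plancherel transform on `L^2(ℝ)`: the unitary extending
`u ↦ (ξ ↦ ∫ u(x) e^{-2πixξ} dx)` from integrable functions. -/
def IsFourierPlancherel (F : L2Sp ≃ₗᵢ[ℂ] L2Sp) : Prop :=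
  ∀ u : L2Sp, Integrable (u : ℝ → ℂ) volume →
    (F u : ℝ → ℂ) =ᵐ[volume]
      fun ξ => ∫ x : ℝ, Complex.exp (-(2 * (Real.pi : ℂ) * Complex.I * (x : ℂ) * (ξ : ℂ))) *
        (u : ℝ → ℂ) x

namespace MeasureTheory.Lp

variable {α E : Type*} [MeasurableSpace α] {μ : Measure α} [NormedAddCommGroup E] {p : ℝ≥0∞}
  [Fact (1 ≤ p)]

theorem dense_setOf_integrable (hp : p ≠ ∞) :
    Dense {u : Lp E p μ | Integrable u μ} :=
  (simpleFunc.dense hp).mono fun u hu => by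
    lift u to simpleFunc E p μ using hu
    have hp0 : p ≠ 0 := (zero_lt_one.trans_le Fact.out).ne'
    exact ((SimpleFunc.memLp_iff_integrable hp0 hp).1 (simpleFunc.memLp u)).congr
      (simpleFunc.toSimpleFunc_eq_toFun u)

variable {β : Type*} [MeasurableSpace β] {μb : Measure β}
  (𝕜 : Type*) [NormedRing 𝕜] [Module 𝕜 E] [IsBoundedSMul 𝕜 E]

def compMeasurableEquivₗᵢ (e : α ≃ᵐ β) (he : MeasurePreserving e μ μb) :
    Lp E p μb ≃ₗᵢ[𝕜] Lp E p μ :=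
  LinearIsometryEquiv.ofSurjective (compMeasurePreservingₗᵢ 𝕜 e he) fun u => by
    refine ⟨compMeasurePreserving e.symm (he.symm e) u, Lp.ext ?_⟩
    filter_upwards [coeFn_compMeasurePreserving (compMeasurePreserving e.symm (he.symm e) u) he,
      he.quasiMeasurePreserving.ae_eq (coeFn_compMeasurePreserving u (he.symm e))] with x h1 h2
    exact h1.trans (h2.trans (congrArg u (e.symm_apply_apply x)))

theorem coeFn_compMeasurableEquivₗᵢ (e : α ≃ᵐ β) (he : MeasurePreserving e μ μb)
    (u : Lp E p μb) : compMeasurableEquivₗᵢ 𝕜 e he u =ᵐ[μ] u ∘ e :=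
  coeFn_compMeasurePreserving u he

end MeasureTheory.Lp

section MulOperator

variable {α : Type*} [MeasurableSpace α] {μ : Measure α} {p : ℝ≥0∞} [Fact (1 ≤ p)]
  {c : α → ℂ} {A : Lp ℂ p μ →L[ℂ] Lp ℂ p μ}

theorem opNorm_le_eLpNorm_top_of_ae_eq_mul (hc : eLpNorm c ∞ μ ≠ ∞)
    (hA : ∀ u, A u =ᵐ[μ] fun x => c x * u x) : ‖A‖ ≤ (eLpNorm c ∞ μ).toReal := by
  refine A.opNorm_le_bound ENNReal.toReal_nonneg fun u => ?_
  rw [Lp.norm_def, Lp.norm_def, eLpNorm_congr_ae (hA u), ← ENNReal.toReal_mul]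
  exact ENNReal.toReal_mono (ENNReal.mul_ne_top hc (Lp.eLpNorm_ne_top u))
    (eLpNorm_smul_le_eLpNorm_top_mul_eLpNorm p (Lp.aestronglyMeasurable u) c)

theorem le_opNorm_of_ae_eq_mul (hp : p ≠ ∞) (hA : ∀ u, A u =ᵐ[μ] fun x => c x * u x)
    {s : Set α} (hs : MeasurableSet s) (hs0 : μ s ≠ 0) (hsfin : μ s ≠ ∞) {r : ℝ}
    (hr : ∀ᵐ x ∂μ, x ∈ s → r ≤ ‖c x‖) : r ≤ ‖A‖ := by
  rcases lt_or_ge r 0 with hr0 | hr0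
  · exact hr0.le.trans (norm_nonneg A)
  have hp0 : p ≠ 0 := (zero_lt_one.trans_le Fact.out).ne'
  set w := indicatorConstLp p hs hsfin (1 : ℂ)
  have hw : ‖w‖ = μ.real s ^ (1 / p.toReal) := by
    rw [norm_indicatorConstLp hp0 hp, norm_one, one_mul]
  have hw0 : 0 < ‖w‖ := by
    rw [hw]
    exact Real.rpow_pos_of_pos (ENNReal.toReal_pos hs0 hsfin) _
  have hAw : A w =ᵐ[μ] s.indicator c := by
    filter_upwards [hA w, indicatorConstLp_coeFn (p := p) (hs := hs) (hμs := hsfin) (c := (1 : ℂ))]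
      with x h1 h2
    rw [h1, h2]
    by_cases hx : x ∈ s <;> simp [hx]
  have hconst : ‖indicatorConstLp p hs hsfin (r : ℂ)‖ = r * ‖w‖ := by
    rw [norm_indicatorConstLp hp0 hp, hw, Complex.norm_real, Real.norm_of_nonneg hr0]
  have hmono : r * ‖w‖ ≤ ‖A w‖ := by
    rw [← hconst, Lp.norm_def, Lp.norm_def, eLpNorm_congr_ae hAw]
    refine ENNReal.toReal_mono (by rw [← eLpNorm_congr_ae hAw]; exact Lp.eLpNorm_ne_top _)
      (eLpNorm_mono_ae ?_)
    filter_upwards [hr, indicatorConstLp_coeFn (p := p) (hs := hs) (hμs := hsfin) (c := (r : ℂ))]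
      with x hx h2
    rw [h2]
    by_cases hxs : x ∈ s
    · simpa [hxs, Real.norm_of_nonneg hr0] using hx hxs
    · simp [hxs]
  exact le_of_mul_le_mul_right (hmono.trans (A.le_opNorm w)) hw0

theorem eLpNorm_top_le_ofReal_opNorm_of_ae_eq_mul [SigmaFinite μ] (hp : p ≠ ∞)
    (hc : AEStronglyMeasurable c μ) (hA : ∀ u, A u =ᵐ[μ] fun x => c x * u x) :
    eLpNorm c ∞ μ ≤ ENNReal.ofReal ‖A‖ := by
  by_contra! h
  obtain ⟨r, hr0, hAr, hrc⟩ := ENNReal.lt_iff_exists_real_btwn.1 h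
  -- a measurable representative of `c` makes its superlevel set measurable
  set s := {x | ENNReal.ofReal r < ‖hc.mk c x‖ₑ}
  have hs : MeasurableSet s :=
    measurableSet_lt measurable_const hc.stronglyMeasurable_mk.measurable.enorm
  have hs0 : μ s ≠ 0 := by
    intro hs0
    refine hrc.not_ge ?_
    rw [eLpNorm_exponent_top, eLpNormEssSup_congr_ae hc.ae_eq_mk]
    refine eLpNormEssSup_le_of_ae_enorm_bound (measure_eq_zero_iff_ae_notMem.1 hs0 |>.mono ?_)
    exact fun x hx => not_lt.1 hx
  obtain ⟨t, ht, hts, ht0, htfin⟩ := Measure.exists_subset_measure_lt_top hs (pos_iff_ne_zero.2 hs0)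
  have hrt : ∀ᵐ x ∂μ, x ∈ t → r ≤ ‖c x‖ := by
    filter_upwards [hc.ae_eq_mk] with x hx hxt
    rw [hx, ← ENNReal.ofReal_le_ofReal_iff (norm_nonneg _), ofReal_norm]
    exact (hts hxt).le
  have := le_opNorm_of_ae_eq_mul hp hA ht ht0.ne' htfin.ne hrt
  exact hAr.not_ge (ENNReal.ofReal_le_ofReal this)

theorem opNorm_eq_eLpNorm_top_of_ae_eq_mul [SigmaFinite μ] (hp : p ≠ ∞)
    (hc : AEStronglyMeasurable c μ) (hA : ∀ u, A u =ᵐ[μ] fun x => c x * u x) :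
    ‖A‖ = (eLpNorm c ∞ μ).toReal :=
  have hle := eLpNorm_top_le_ofReal_opNorm_of_ae_eq_mul hp hc hA
  le_antisymm
    (opNorm_le_eLpNorm_top_of_ae_eq_mul (ne_top_of_le_ne_top ENNReal.ofReal_ne_top hle) hA)
    (ENNReal.toReal_le_of_le_ofReal (norm_nonneg A) hle)

end MulOperator

def translation (lam : ℝ) : L2Sp ≃ₗᵢ[ℂ] L2Sp :=
  Lp.compMeasurableEquivₗᵢ ℂ (MeasurableEquiv.subRight lam)
    (measurePreserving_sub_right volume lam)

theorem coeFn_translation (lam : ℝ) (u : L2Sp) :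
    translation lam u =ᵐ[volume] fun x => u (x - lam) :=
  Lp.coeFn_compMeasurableEquivₗᵢ ℂ _ _ u

theorem IsMulOp.sub {a a' : ℝ → ℂ} {M M' : OpSp} (hM : IsMulOp a M) (hM' : IsMulOp a' M') :
    IsMulOp (a - a') (M - M') := fun u => by
  filter_upwards [Lp.coeFn_sub (M u) (M' u), hM u, hM' u] with x h h1 h2
  rw [sub_apply, h, Pi.sub_apply, h1, h2, Pi.sub_apply, sub_mul]

theorem IsMulOp.conj_translation {a : ℝ → ℂ} {M : OpSp} (hM : IsMulOp a M) (lam : ℝ) :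
    IsMulOp (fun x => a (x - lam))
      ((translation lam : OpSp) ∘L M ∘L ((translation lam).symm : OpSp)) := fun u => by
  set v := (translation lam).symm u
  have hv : (u : ℝ → ℂ) =ᵐ[volume] fun x => v (x - lam) := by
    simpa [v] using coeFn_translation lam v
  filter_upwards [coeFn_translation lam (M v),
    (measurePreserving_sub_right volume lam).quasiMeasurePreserving.ae_eq (hM v), hv]
    with x h1 h2 h3
  change translation lam (M v) x = _
  exact h1.trans (h2.trans (by rw [h3]; rfl))

theorem IsFourierPlancherel.apply_modulation {F : L2Sp ≃ₗᵢ[ℂ] L2Sp} (hF : IsFourierPlancherel F)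
    {lam : ℝ} {E : OpSp}
    (hE : IsMulOp (fun x => Complex.exp (2 * (Real.pi : ℂ) * Complex.I * (lam : ℂ) * (x : ℂ))) E)
    (u : L2Sp) : F (E u) = translation lam (F u) := by
  set e : ℝ → ℂ := fun x => Complex.exp (2 * (Real.pi : ℂ) * Complex.I * (lam : ℂ) * (x : ℂ))
  have he : Continuous e := by fun_prop
  have he1 : ∀ x, ‖e x‖ = 1 := fun x => by simp [e, Complex.norm_exp]
  have hintegrable : ∀ v : L2Sp, Integrable v volume → F (E v) = translation lam (F v) := by
    intro v hv
    have hEv : Integrable (E v) :=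
      (hv.bdd_mul he.aestronglyMeasurable (ae_of_all _ fun x => (he1 x).le)).congr (hE v).symm
    refine Lp.ext ((hF _ hEv).trans ?_)
    filter_upwards [coeFn_translation lam (F v),
      (measurePreserving_sub_right volume lam).quasiMeasurePreserving.ae_eq (hF v hv)]
      with ξ h1 h2
    rw [h1, Function.comp_apply.symm.trans h2]
    refine integral_congr_ae ?_
    filter_upwards [hE v] with x hx
    rw [hx, ← mul_assoc, ← Complex.exp_add]
    congr 2
    push_cast
    ring
  exact congrFun (Continuous.ext_on (Lp.dense_setOf_integrable (p := 2) ENNReal.ofNat_ne_top)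
    (F.continuous.comp E.continuous) ((translation lam).continuous.comp F.continuous)
    hintegrable) u

theorem stmt_11_general (b : ℝ → ℂ) (hbm : Measurable b)
    (F : L2Sp ≃ₗᵢ[ℂ] L2Sp) (hF : IsFourierPlancherel F)
    (Mb : OpSp) (hMb : IsMulOp b Mb)
    (lam : ℝ) (E : OpSp)
    (hE : IsMulOp (fun x => Complex.exp (2 * (Real.pi : ℂ) * Complex.I * (lam : ℂ) * (x : ℂ))) E)
    (Wb : OpSp) (hWb : ∀ u : L2Sp, Wb u = F.symm (Mb (F u))) :
    ‖Wb * E - E * Wb‖ = (eLpNorm (fun x => b x - b (x - lam)) ⊤ volume).toReal := by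
  set T := translation lam
  set A : OpSp := Mb - (T : OpSp) ∘L Mb ∘L (T.symm : OpSp)
  have hA : IsMulOp (fun x => b x - b (x - lam)) A := hMb.sub (hMb.conj_translation lam)
  have hFE : ∀ u, F (E u) = T (F u) := hF.apply_modulation hE
  have hEF : ∀ v, E (F.symm v) = F.symm (T v) := fun v =>
    F.eq_symm_apply.2 (by rw [hFE, F.apply_symm_apply])
  have hcomm : Wb * E - E * Wb = (F.symm : OpSp) ∘L (A ∘L (T : OpSp)) ∘L (F : OpSp) := by
    ext1 u
    simp [hWb, hFE, hEF, A]
  rw [hcomm, ContinuousLinearMap.opNorm_linearIsometryEquiv_comp,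
    ContinuousLinearMap.opNorm_comp_linearIsometryEquiv,
    ContinuousLinearMap.opNorm_comp_linearIsometryEquiv]
  exact opNorm_eq_eLpNorm_top_of_ae_eq_mul ENNReal.ofNat_ne_top
    (hbm.sub (hbm.comp (measurable_sub_const lam))).aestronglyMeasurable hA

/-- for `b ∈ L^∞(ℝ)` and `λ ∈ ℝ`, the norm of the commutator of the convolution
operator `W⁰(b) = 𝓕⁻¹ M_b 𝓕` with the modulation `M_{e_λ}`, `e_λ(x) = e^{2πiλx}`, equals
`‖b - b(· - λ)‖_{L^∞(ℝ)}`. -/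
theorem stmt_11 (b : ℝ → ℂ) (hbm : Measurable b) (C : ℝ) (hbd : ∀ x : ℝ, ‖b x‖ ≤ C)
    (F : L2Sp ≃ₗᵢ[ℂ] L2Sp) (hF : IsFourierPlancherel F)
    (Mb : OpSp) (hMb : IsMulOp b Mb)
    (lam : ℝ) (E : OpSp)
    (hE : IsMulOp (fun x => Complex.exp (2 * (Real.pi : ℂ) * Complex.I * (lam : ℂ) * (x : ℂ))) E)
    (Wb : OpSp) (hWb : ∀ u : L2Sp, Wb u = F.symm (Mb (F u))) :
    ‖Wb * E - E * Wb‖ = (eLpNorm (fun x => b x - b (x - lam)) ⊤ volume).toReal :=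
  stmt_11_general b hbm F hF Mb hMb lam E hE Wb hWb
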